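/- Strict inequality in the Burbea–Hahn bound holds if and only if (C_Ω(z;X)/B_Ω(z;X)) · b_{z,X} ≠ b_z c_{z,X}; i.e., B_Ω(z;X) > C_Ω(z;X)/‖b_z c_{z,X}‖_{L²(Ω)} iff b_z c_{z,X} is not orthogonal to S_{z,X}. -/

import Mathlib

open MeasureTheory Complex ComplexConjugate Metric

noncomputable section

abbrev Cn (n : ℕ) := EuclideanSpace ℂ (Fin n)

instance {n : ℕ} : MeasurableSpace (Cn n) := MeasurableSpace.comap WithLp.ofLp MeasurableSpace.pi
instance {n : ℕ} : BorelSpace (Cn n) := PiLp.borelSpace _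
instance {n : ℕ} : MeasureSpace (Cn n) := ⟨Measure.map (WithLp.toLp 2) (volume : Measure (Fin n → ℂ))⟩

/-- Membership in the Bergman space `A²(Ω)`: holomorphic on `Ω` and square-integrable. -/
def A2mem {n : ℕ} (Ω : Set (Cn n)) (f : Cn n → ℂ) : Prop :=
  DifferentiableOn ℂ f Ω ∧ MeasureTheory.MemLp f 2 (volume.restrict Ω)

/-- The `L²(Ω)` norm of a function. -/
def L2norm {n : ℕ} (Ω : Set (Cn n)) (f : Cn n → ℂ) : ℝ :=
  Real.sqrt (∫ ζ in Ω, ‖f ζ‖ ^ 2)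

/-- `K` is the Bergman kernel of `Ω`: for each `z ∈ Ω`, `K (·, z) ∈ A²(Ω)` and `K`
has the reproducing property. -/
def IsBergmanKernel {n : ℕ} (Ω : Set (Cn n)) (K : Cn n → Cn n → ℂ) : Prop :=
  (∀ z ∈ Ω, A2mem Ω (fun ζ => K ζ z)) ∧
  (∀ f, A2mem Ω f → ∀ z ∈ Ω, f z = ∫ ζ in Ω, f ζ * conj (K ζ z))

/-- The normalized Bergman kernel `b_z = K(·,z)/√K(z,z)`. -/
def bz {n : ℕ} (K : Cn n → Cn n → ℂ) (z ζ : Cn n) : ℂ :=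
  K ζ z / (Real.sqrt (K z z).re : ℂ)

/-- `X̄_z K(ζ,z) = Σ_j conj X_j ∂K(ζ,z)/∂z̄_j`, computed as the conjugate of the
complex directional derivative of the holomorphic function `w ↦ conj (K ζ w)`. -/
def barDeriv {n : ℕ} (K : Cn n → Cn n → ℂ) (X z ζ : Cn n) : ℂ :=
  conj (fderiv ℂ (fun w => conj (K ζ w)) z X)

/-- The Bergman metric `B_Ω(z;X)`. -/
def BergmanMetric {n : ℕ} (Ω : Set (Cn n)) (K : Cn n → Cn n → ℂ) (z X : Cn n) : ℝ :=
  (Real.sqrt (K z z).re)⁻¹ *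
    sSup {r | ∃ f : Cn n → ℂ, DifferentiableOn ℂ f Ω ∧ f z = 0 ∧
      (∫ ζ in Ω, ‖f ζ‖ ^ 2) ≤ 1 ∧ r = ‖fderiv ℂ f z X‖}

/-- The Carathéodory metric `C_Ω(z;X)`. -/
def CaraMetric {n : ℕ} (Ω : Set (Cn n)) (z X : Cn n) : ℝ :=
  sSup {r | ∃ f : Cn n → ℂ, DifferentiableOn ℂ f Ω ∧ f z = 0 ∧
      (∀ ζ ∈ Ω, ‖f ζ‖ < 1) ∧ r = ‖fderiv ℂ f z X‖}

/-- A Carathéodory extremal function `c_{z,X}`. -/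
def IsCaraExtremal {n : ℕ} (Ω : Set (Cn n)) (z X : Cn n) (c : Cn n → ℂ) : Prop :=
  DifferentiableOn ℂ c Ω ∧ c z = 0 ∧ (∀ ζ ∈ Ω, ‖c ζ‖ < 1) ∧
    fderiv ℂ c z X = (CaraMetric Ω z X : ℂ)

/-- The subspace `S_{z,X} = {f ∈ A²(Ω) : f(z)=0, Xf(z)=0}`. -/
def SzX {n : ℕ} (Ω : Set (Cn n)) (z X : Cn n) (f : Cn n → ℂ) : Prop :=
  A2mem Ω f ∧ f z = 0 ∧ fderiv ℂ f z X = 0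

/-- `p = P_{z,X} g`: the orthogonal projection of `g` onto `S_{z,X}^⊥`,
characterized by `p ∈ A²(Ω)`, `p ⊥ S_{z,X}` and `g - p ∈ S_{z,X}`. -/
def IsProj {n : ℕ} (Ω : Set (Cn n)) (z X : Cn n) (g p : Cn n → ℂ) : Prop :=
  A2mem Ω p ∧ (∀ h, SzX Ω z X h → (∫ ζ in Ω, h ζ * conj (p ζ)) = 0) ∧
    SzX Ω z X (g - p)

/-- The (unit-norm) Bergman extremal function `b_{z,X}` with `X b_{z,X}(z) > 0`. -/
def IsBergmanExtremal {n : ℕ} (Ω : Set (Cn n)) (K : Cn n → Cn n → ℂ) (z X : Cn n)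
    (b : Cn n → ℂ) : Prop :=
  A2mem Ω b ∧ b z = 0 ∧ L2norm Ω b = 1 ∧
    fderiv ℂ b z X = ((Real.sqrt (K z z).re * BergmanMetric Ω K z X : ℝ) : ℂ) ∧
    ∀ f : Cn n → ℂ, DifferentiableOn ℂ f Ω → f z = 0 → (∫ ζ in Ω, ‖f ζ‖ ^ 2) ≤ 1 →
      ‖fderiv ℂ f z X‖ ≤ Real.sqrt (K z z).re * BergmanMetric Ω K z X

/-!
Write `g = b_z c_{z,X}` and `t = C/B`. The first variation of the Bergman extremal problem along
`b_{z,X} + a f` shows `X f(z) = √K(z,z) B ⟨f, b_{z,X}⟩` for `f ∈ A²(Ω)` vanishing at `z`, so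
`b_{z,X} ⊥ S_{z,X}`; and `g - t b_{z,X} ∈ S_{z,X}` since `X g(z) = √K(z,z) C`. Hence
`t b_{z,X} = P_{z,X} g`, and Pythagoras gives `‖g‖² = ‖g - t b_{z,X}‖² + t²`: the Burbea–Hahn
bound `B ≥ C/‖g‖` is strict iff `g ≠ t b_{z,X}`, which happens iff `g` is not orthogonal to
`S_{z,X}`.
-/

instance {n : ℕ} : (volume : Measure (Cn n)).IsOpenPosMeasure :=
  (PiLp.continuous_toLp 2 _).isOpenPosMeasure_map fun x => ⟨WithLp.ofLp x, rfl⟩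

instance {n : ℕ} : IsFiniteMeasureOnCompacts (volume : Measure (Cn n)) :=
  Measure.IsFiniteMeasureOnCompacts.map (volume : Measure (Fin n → ℂ)) (PiLp.homeomorph 2 _).symm

section L2

variable {α : Type*} [MeasurableSpace α] {μ : Measure α} {f g : α → ℂ}

lemma integrable_mul_conj (hf : MemLp f 2 μ) (hg : MemLp g 2 μ) :
    Integrable (fun x => f x * conj (g x)) μ :=
  hf.integrable_mul hg.star

lemma integral_mul_conj_swap (f g : α → ℂ) :
    ∫ x, g x * conj (f x) ∂μ = conj (∫ x, f x * conj (g x) ∂μ) := by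
  rw [← integral_conj]
  simp [mul_comm]

lemma integral_norm_add_mul_sq (hf : MemLp f 2 μ) (hg : MemLp g 2 μ) (a : ℂ) :
    ∫ x, ‖f x + a * g x‖ ^ 2 ∂μ =
      ∫ x, ‖f x‖ ^ 2 ∂μ + 2 * (a * ∫ x, g x * conj (f x) ∂μ).re +
        ‖a‖ ^ 2 * ∫ x, ‖g x‖ ^ 2 ∂μ := by
  have hpt : ∀ x, ‖f x + a * g x‖ ^ 2 =
      ‖f x‖ ^ 2 + 2 * (a * (g x * conj (f x))).re + ‖a‖ ^ 2 * ‖g x‖ ^ 2 := fun x => by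
    simp only [Complex.sq_norm, Complex.normSq_apply, Complex.add_re, Complex.add_im,
      Complex.mul_re, Complex.mul_im, Complex.conj_re, Complex.conj_im]
    ring
  have hf2 := hf.integrable_norm_pow two_ne_zero
  have hg2 := hg.integrable_norm_pow two_ne_zero
  have hcross := (integrable_mul_conj hg hf).const_mul a
  have hcross_re : Integrable (fun x => 2 * (a * (g x * conj (f x))).re) μ :=
    hcross.re.const_mul 2
  simp_rw [hpt]
  rw [integral_add (hf2.fun_add hcross_re) (hg2.const_mul _), integral_add hf2 hcross_re,
    integral_const_mul, integral_const_mul, ← integral_const_mul a, ← RCLike.re_to_complex,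
    ← integral_re hcross]
  rfl

lemma integral_mul_conj_self (f : α → ℂ) :
    ∫ x, f x * conj (f x) ∂μ = ((∫ x, ‖f x‖ ^ 2 ∂μ : ℝ) : ℂ) := by
  simp_rw [Complex.mul_conj']
  exact_mod_cast integral_ofReal (𝕜 := ℂ)

lemma integral_norm_sq_eq_zero_iff (hf : MemLp f 2 μ) :
    ∫ x, ‖f x‖ ^ 2 ∂μ = 0 ↔ f =ᵐ[μ] 0 := by
  rw [integral_eq_zero_iff_of_nonneg (fun _ => by positivity) (hf.integrable_norm_pow two_ne_zero)]
  simp [Filter.EventuallyEq]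

end L2

lemma setIntegral_norm_sq_eq_zero_iff {X : Type*} [TopologicalSpace X] [MeasurableSpace X]
    [OpensMeasurableSpace X] {μ : Measure X} [μ.IsOpenPosMeasure] {U : Set X} (hU : IsOpen U)
    {f : X → ℂ} (hfc : ContinuousOn f U) (hf : MemLp f 2 (μ.restrict U)) :
    ∫ x in U, ‖f x‖ ^ 2 ∂μ = 0 ↔ ∀ x ∈ U, f x = 0 := by
  rw [integral_norm_sq_eq_zero_iff hf]
  constructor
  · exact fun h => Measure.eqOn_open_of_ae_eq h hU hfc continuousOn_const
  · intro h
    filter_upwards [ae_restrict_mem hU.measurableSet] with x hx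
    exact h x hx

/-- The first-order condition for `a ↦ ‖M + a D‖² / (1 + 2 Re (a J) + ‖a‖² S)` to be maximal
at `a = 0`. -/
lemma eq_ofReal_mul_of_forall_norm_sq_le {M S : ℝ} (hM : 0 < M) {D J : ℂ}
    (h : ∀ a : ℂ, ‖(M : ℂ) + a * D‖ ^ 2 ≤ M ^ 2 * (1 + 2 * (a * J).re + ‖a‖ ^ 2 * S)) :
    D = M * J := by
  set E := D - M * J
  by_contra hne
  have hE : 0 < ‖E‖ := norm_pos_iff.2 (sub_ne_zero.2 hne)
  set s : ℝ := 1 / (M * |S| + 1)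
  have hs : 0 < s := by positivity
  have hsS : s * (M * |S|) < 1 := by
    rw [div_mul_eq_mul_div, one_mul, div_lt_one (by positivity)]
    linarith
  have hre : (s * conj E * D).re - M * (s * conj E * J).re = s * ‖E‖ ^ 2 := by
    have : s * conj E * D - M * (s * conj E * J) = ((s * ‖E‖ ^ 2 : ℝ) : ℂ) := by
      push_cast
      rw [← Complex.conj_mul']
      ring
    rw [← Complex.re_ofReal_mul, ← Complex.sub_re, this, Complex.ofReal_re]
  have hexp : M ^ 2 + 2 * M * (s * conj E * D).re ≤ ‖(M : ℂ) + s * conj E * D‖ ^ 2 := by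
    have : ‖(M : ℂ) + s * conj E * D‖ ^ 2 =
        M ^ 2 + 2 * M * (s * conj E * D).re + ‖s * conj E * D‖ ^ 2 := by
      simp only [Complex.sq_norm, Complex.normSq_apply, Complex.add_re, Complex.add_im,
        Complex.ofReal_re, Complex.ofReal_im]
      ring
    rw [this]
    linarith [sq_nonneg ‖s * conj E * D‖]
  have hnorm : ‖(s : ℂ) * conj E‖ ^ 2 = s ^ 2 * ‖E‖ ^ 2 := by
    rw [norm_mul, Complex.norm_real, Real.norm_of_nonneg hs.le, RCLike.norm_conj, mul_pow]
  have key := hexp.trans ((h _).trans_eq (by rw [hnorm]))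
  have hP : 0 < M * s * ‖E‖ ^ 2 := by positivity
  have hgain : 2 * (M * s * ‖E‖ ^ 2) ≤ (M * s * ‖E‖ ^ 2) * (s * (M * S)) := by
    linear_combination key - 2 * M * hre
  have hsmall : s * (M * S) < 1 :=
    (mul_le_mul_of_nonneg_left (mul_le_mul_of_nonneg_left (le_abs_self S) hM.le) hs.le).trans_lt
      hsS
  nlinarith [mul_lt_mul_of_pos_left hsmall hP]

section Caratheodory

variable {n : ℕ} {Ω : Set (Cn n)} {z X : Cn n}

lemma caraMetric_nonneg : 0 ≤ CaraMetric Ω z X :=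
  Real.sSup_nonneg fun _ ⟨_, _, _, _, hr⟩ => hr ▸ norm_nonneg _

lemma bddAbove_caraMetric_set (hΩ : IsOpen Ω) (hz : z ∈ Ω) :
    BddAbove {r | ∃ f : Cn n → ℂ, DifferentiableOn ℂ f Ω ∧ f z = 0 ∧
      (∀ ζ ∈ Ω, ‖f ζ‖ < 1) ∧ r = ‖fderiv ℂ f z X‖} := by
  obtain ⟨R, hR, hball⟩ := Metric.isOpen_iff.1 hΩ z hz
  refine ⟨‖X‖ / R, ?_⟩
  rintro _ ⟨f, hfd, hfz, hf1, rfl⟩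
  have hmaps : Set.MapsTo f (ball z R) (closedBall (f z) 1) := fun ζ hζ => by
    simpa [hfz] using (hf1 ζ (hball hζ)).le
  calc ‖fderiv ℂ f z X‖ ≤ ‖fderiv ℂ f z‖ * ‖X‖ := (fderiv ℂ f z).le_opNorm X
    _ ≤ 1 / R * ‖X‖ := by
      gcongr
      exact Complex.norm_fderiv_le_div_of_mapsTo_ball (hfd.mono hball) hmaps hR
    _ = ‖X‖ / R := by ring

lemma caraMetric_pos (hΩ : IsOpen Ω) (hΩb : Bornology.IsBounded Ω) (hz : z ∈ Ω) (hX : X ≠ 0) :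
    0 < CaraMetric Ω z X := by
  obtain ⟨R, hR⟩ := hΩb.subset_closedBall z
  have hR0 : 0 ≤ R := by simpa using hR hz
  set ε : ℝ := 1 / (‖X‖ * R + 1)
  have hε : 0 < ε := by positivity
  set L : Cn n →L[ℂ] ℂ := (ε : ℂ) • innerSL ℂ X
  have hLX : L X = ((ε * ‖X‖ ^ 2 : ℝ) : ℂ) := by
    simp [L, inner_self_eq_norm_sq_to_K]
  have hderiv : fderiv ℂ (fun ζ => L ζ - L z) z = L := (L.hasFDerivAt.sub_const (L z)).fderiv
  have hlt : ∀ ζ ∈ Ω, ‖L ζ - L z‖ < 1 := by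
    intro ζ hζ
    have hζz : ‖ζ - z‖ ≤ R := by simpa [dist_eq_norm] using hR hζ
    calc ‖L ζ - L z‖ = ε * ‖inner ℂ X (ζ - z)‖ := by
          simp [L, Real.norm_of_nonneg hε.le, ← mul_sub]
      _ ≤ ε * (‖X‖ * R) := by
          gcongr
          exact (norm_inner_le_norm X _).trans (by gcongr)
      _ < 1 := by
          rw [div_mul_eq_mul_div, one_mul, div_lt_one (by positivity)]
          linarith
  have hmem : ε * ‖X‖ ^ 2 ≤ CaraMetric Ω z X := by
    refine le_csSup (bddAbove_caraMetric_set hΩ hz)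
      ⟨fun ζ => L ζ - L z, by fun_prop, sub_self _, hlt, ?_⟩
    rw [hderiv, hLX, Complex.norm_real, Real.norm_of_nonneg (by positivity)]
  have : 0 < ε * ‖X‖ ^ 2 := by positivity
  linarith

end Caratheodory

lemma norm_fderiv_sq_le_of_forall_le {E : Type*} [NormedAddCommGroup E] [NormedSpace ℂ E]
    [MeasurableSpace E] {μ : Measure E} {Ω : Set E} {z X : E} {M : ℝ}
    (hM : ∀ f : E → ℂ, DifferentiableOn ℂ f Ω → f z = 0 → ∫ ζ in Ω, ‖f ζ‖ ^ 2 ∂μ ≤ 1 →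
      ‖fderiv ℂ f z X‖ ≤ M)
    {f : E → ℂ} (hfd : DifferentiableOn ℂ f Ω) (hfz : f z = 0) :
    ‖fderiv ℂ f z X‖ ^ 2 ≤ M ^ 2 * ∫ ζ in Ω, ‖f ζ‖ ^ 2 ∂μ := by
  set S := ∫ ζ in Ω, ‖f ζ‖ ^ 2 ∂μ
  have hscale : ∀ r : ℝ, r ^ 2 * S ≤ 1 → |r| * ‖fderiv ℂ f z X‖ ≤ M := by
    intro r hr
    have h := hM ((r : ℂ) • f) (hfd.const_smul _) (by simp [hfz]) (by
      simpa [norm_mul, mul_pow, integral_const_mul] using hr)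
    simpa [fderiv_const_smul_field, norm_mul] using h
  rcases (integral_nonneg fun _ => by positivity : 0 ≤ S).lt_or_eq with hS | hS
  · have h := hscale (√S)⁻¹ (by
      rw [inv_pow, Real.sq_sqrt hS.le, inv_mul_cancel₀ hS.ne'])
    rw [abs_of_pos (by positivity), inv_mul_le_iff₀ (by positivity)] at h
    calc ‖fderiv ℂ f z X‖ ^ 2 ≤ (√S * M) ^ 2 := by gcongr
      _ = M ^ 2 * S := by rw [mul_pow, Real.sq_sqrt hS.le, mul_comm]
  · replace hS : S = 0 := hS.symm
    rw [hS, mul_zero]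
    by_contra! hD
    have hD' : 0 < ‖fderiv ℂ f z X‖ := by nlinarith [norm_nonneg (fderiv ℂ f z X)]
    have h := hscale ((|M| + 1) / ‖fderiv ℂ f z X‖) (by rw [hS, mul_zero]; exact zero_le_one)
    rw [abs_of_pos (by positivity), div_mul_cancel₀ _ hD'.ne'] at h
    linarith [le_abs_self M]

namespace IsBergmanKernel

variable {n : ℕ} {Ω : Set (Cn n)} {K : Cn n → Cn n → ℂ} {z : Cn n}

lemma diag_eq (hK : IsBergmanKernel Ω K) (hz : z ∈ Ω) :
    K z z = ((∫ ζ in Ω, ‖K ζ z‖ ^ 2 : ℝ) : ℂ) := by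
  rw [hK.2 _ (hK.1 z hz) z hz, integral_mul_conj_self]

/-- `K(·, z) ≠ 0` because it reproduces the constant `1 ∈ A²(Ω)`. -/
lemma re_diag_pos [IsFiniteMeasure (volume.restrict Ω)] (hK : IsBergmanKernel Ω K)
    (hz : z ∈ Ω) : 0 < (K z z).re := by
  have hone := hK.2 (fun _ => 1) ⟨differentiableOn_const 1, memLp_const 1⟩ z hz
  rw [diag_eq hK hz, Complex.ofReal_re]
  refine (integral_nonneg fun _ => by positivity).lt_of_ne fun h => ?_
  have hK0 := (integral_norm_sq_eq_zero_iff (hK.1 z hz).2).1 h.symm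
  have : ∫ ζ in Ω, (1 : ℂ) * conj (K ζ z) = 0 := by
    rw [integral_congr_ae (g := 0) (by filter_upwards [hK0] with ζ hζ; simp [hζ])]
    simp
  exact one_ne_zero (hone.trans this)

lemma a2mem_bz (hK : IsBergmanKernel Ω K) (hz : z ∈ Ω) : A2mem Ω (bz K z) := by
  rw [show bz K z = fun ζ => K ζ z * ((√(K z z).re : ℂ))⁻¹ from funext fun ζ => div_eq_mul_inv _ _]
  exact ⟨(hK.1 z hz).1.mul_const _, (hK.1 z hz).2.mul_const _⟩

lemma integral_norm_bz_sq [IsFiniteMeasure (volume.restrict Ω)] (hK : IsBergmanKernel Ω K)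
    (hz : z ∈ Ω) : ∫ ζ in Ω, ‖bz K z ζ‖ ^ 2 = 1 := by
  have hpos := re_diag_pos hK hz
  simp_rw [bz, norm_div, div_pow, Complex.norm_real, Real.norm_of_nonneg (Real.sqrt_nonneg _),
    Real.sq_sqrt hpos.le]
  rw [integral_div, div_eq_one_iff_eq hpos.ne', diag_eq hK hz, Complex.ofReal_re]

lemma bz_self (hK : IsBergmanKernel Ω K) (hz : z ∈ Ω) : bz K z z = (√(K z z).re : ℂ) := by
  have hreal : K z z = ((K z z).re : ℂ) := by rw [diag_eq hK hz, Complex.ofReal_re]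
  rw [bz, hreal, Complex.ofReal_re, ← Complex.ofReal_div, Real.div_sqrt]

end IsBergmanKernel

section Multiplier

variable {n : ℕ} {Ω : Set (Cn n)} {f c : Cn n → ℂ}

lemma A2mem.mul_of_norm_le_one (hΩ : MeasurableSet Ω) (hf : A2mem Ω f)
    (hcd : DifferentiableOn ℂ c Ω) (hc1 : ∀ ζ ∈ Ω, ‖c ζ‖ ≤ 1) : A2mem Ω (fun ζ => f ζ * c ζ) := by
  refine ⟨hf.1.mul hcd, hf.2.of_le ((hf.1.mul hcd).continuousOn.aestronglyMeasurable hΩ) ?_⟩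
  filter_upwards [ae_restrict_mem hΩ] with ζ hζ
  rw [norm_mul]
  exact mul_le_of_le_one_right (norm_nonneg _) (hc1 ζ hζ)

lemma setIntegral_norm_mul_sq_le (hΩ : MeasurableSet Ω) (hf : MemLp f 2 (volume.restrict Ω))
    (hc1 : ∀ ζ ∈ Ω, ‖c ζ‖ ≤ 1) : ∫ ζ in Ω, ‖f ζ * c ζ‖ ^ 2 ≤ ∫ ζ in Ω, ‖f ζ‖ ^ 2 := by
  refine integral_mono_of_nonneg (ae_of_all _ fun _ => by positivity)
    (hf.integrable_norm_pow two_ne_zero) ?_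
  filter_upwards [ae_restrict_mem hΩ] with ζ hζ
  rw [norm_mul, mul_pow]
  exact mul_le_of_le_one_right (by positivity) (pow_le_one₀ (norm_nonneg _) (hc1 ζ hζ))

end Multiplier

lemma fderiv_bz_mul {n : ℕ} {Ω : Set (Cn n)} {K : Cn n → Cn n → ℂ} {z X : Cn n} {c : Cn n → ℂ}
    (hΩ : IsOpen Ω) (hK : IsBergmanKernel Ω K) (hz : z ∈ Ω)
    (hcd : DifferentiableOn ℂ c Ω) (hcz : c z = 0) :
    fderiv ℂ (fun ζ => bz K z ζ * c ζ) z X = √(K z z).re * fderiv ℂ c z X := by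
  have hbz := ((hK.a2mem_bz hz).1 z hz).differentiableAt (hΩ.mem_nhds hz)
  have hc := (hcd z hz).differentiableAt (hΩ.mem_nhds hz)
  rw [show (fun ζ => bz K z ζ * c ζ) = bz K z * c from rfl, fderiv_mul hbz hc]
  simp [hcz, hK.bz_self hz]

namespace IsBergmanExtremal

variable {n : ℕ} {Ω : Set (Cn n)} {K : Cn n → Cn n → ℂ} {z X : Cn n} {b : Cn n → ℂ}

lemma integral_norm_sq (hb : IsBergmanExtremal Ω K z X b) : ∫ ζ in Ω, ‖b ζ‖ ^ 2 = 1 :=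
  Real.sqrt_eq_one.1 hb.2.2.1

/-- The first variation of the extremal problem, along `b + a f`. -/
lemma fderiv_eq_mul_integral (hΩ : IsOpen Ω) (hz : z ∈ Ω) (hb : IsBergmanExtremal Ω K z X b)
    (hM : 0 < √(K z z).re * BergmanMetric Ω K z X) {f : Cn n → ℂ} (hf : A2mem Ω f)
    (hfz : f z = 0) :
    fderiv ℂ f z X =
      ((√(K z z).re * BergmanMetric Ω K z X : ℝ) : ℂ) * ∫ ζ in Ω, f ζ * conj (b ζ) := by
  have hb1 := hb.integral_norm_sq
  obtain ⟨⟨hbd, hb2⟩, hbz, -, hbX, hbmax⟩ := hb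
  have hbz' := (hbd z hz).differentiableAt (hΩ.mem_nhds hz)
  have hfz' := (hf.1 z hz).differentiableAt (hΩ.mem_nhds hz)
  refine eq_ofReal_mul_of_forall_norm_sq_le (S := ∫ ζ in Ω, ‖f ζ‖ ^ 2) hM fun a => ?_
  have h := norm_fderiv_sq_le_of_forall_le hbmax (f := fun ζ => b ζ + a * f ζ)
    (hbd.add (hf.1.const_mul a)) (by simp [hbz, hfz])
  rwa [fderiv_fun_add hbz' (hfz'.const_mul a), fderiv_const_mul hfz', add_apply,
    hbX, smul_apply, smul_eq_mul, integral_norm_add_mul_sq hb2 hf.2, hb1] at h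

lemma integral_mul_conj_eq_zero (hΩ : IsOpen Ω) (hz : z ∈ Ω) (hb : IsBergmanExtremal Ω K z X b)
    (hM : 0 < √(K z z).re * BergmanMetric Ω K z X) {h : Cn n → ℂ} (hh : SzX Ω z X h) :
    ∫ ζ in Ω, h ζ * conj (b ζ) = 0 := by
  have h := hb.fderiv_eq_mul_integral hΩ hz hM hh.1 hh.2.1
  rw [hh.2.2, eq_comm, mul_eq_zero, Complex.ofReal_eq_zero] at h
  exact h.resolve_left hM.ne'

end IsBergmanExtremal

namespace IsProj

variable {n : ℕ} {Ω : Set (Cn n)} {z X : Cn n} {g p : Cn n → ℂ}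

lemma integral_norm_sq_eq_add (hp : IsProj Ω z X g p) :
    ∫ ζ in Ω, ‖g ζ‖ ^ 2 = (∫ ζ in Ω, ‖(g - p) ζ‖ ^ 2) + ∫ ζ in Ω, ‖p ζ‖ ^ 2 := by
  obtain ⟨hpA, horth, hgpS⟩ := hp
  have h := integral_norm_add_mul_sq hgpS.1.2 hpA.2 1
  rw [integral_mul_conj_swap, horth _ hgpS] at h
  simp only [Pi.sub_apply, one_mul, sub_add_cancel, map_zero, mul_zero, Complex.zero_re,
    norm_one, one_pow, add_zero] at h
  exact h

lemma orthogonal_iff (hΩ : IsOpen Ω) (hp : IsProj Ω z X g p) :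
    (∀ h, SzX Ω z X h → ∫ ζ in Ω, g ζ * conj (h ζ) = 0) ↔ ∀ ζ ∈ Ω, g ζ = p ζ := by
  obtain ⟨hpA, horth, hgpS⟩ := hp
  have hpS : ∀ h, SzX Ω z X h → ∫ ζ in Ω, p ζ * conj (h ζ) = 0 := fun h hh => by
    rw [integral_mul_conj_swap, horth h hh, map_zero]
  have hvanish := setIntegral_norm_sq_eq_zero_iff hΩ hgpS.1.1.continuousOn hgpS.1.2
  constructor
  · intro hg ζ hζ
    have hg2 : MemLp g 2 (volume.restrict Ω) := by simpa using hgpS.1.2.add hpA.2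
    have h : ∫ ζ in Ω, (g - p) ζ * conj ((g - p) ζ) = 0 := calc
      _ = (∫ ζ in Ω, g ζ * conj ((g - p) ζ)) - ∫ ζ in Ω, p ζ * conj ((g - p) ζ) := by
        rw [← integral_sub (integrable_mul_conj hg2 hgpS.1.2) (integrable_mul_conj hpA.2 hgpS.1.2)]
        simp only [Pi.sub_apply, sub_mul]
      _ = 0 := by rw [hg _ hgpS, hpS _ hgpS, sub_zero]
    rw [integral_mul_conj_self, Complex.ofReal_eq_zero, hvanish] at h
    exact sub_eq_zero.1 (h ζ hζ)
  · intro hgp h hh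
    rw [← hpS h hh]
    exact setIntegral_congr_fun hΩ.measurableSet fun ζ hζ => by rw [hgp ζ hζ]

end IsProj

lemma div_sqrt_add_sq_div_lt_iff {C B P : ℝ} (hC : 0 < C) (hB : 0 < B) (hP : 0 ≤ P) :
    C / √(P + (C / B) ^ 2) < B ↔ 0 < P := by
  rw [div_lt_iff₀ (Real.sqrt_pos.2 (by positivity)), ← div_lt_iff₀' hB,
    Real.lt_sqrt (div_pos hC hB).le, lt_add_iff_pos_left]

section BurbeaHahn

variable {n : ℕ} {Ω : Set (Cn n)} {K : Cn n → Cn n → ℂ} {z X : Cn n} {b c : Cn n → ℂ}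

lemma caraMetric_le_bergmanMetric [IsFiniteMeasure (volume.restrict Ω)] (hΩ : IsOpen Ω)
    (hK : IsBergmanKernel Ω K) (hz : z ∈ Ω) (hb : IsBergmanExtremal Ω K z X b)
    (hc : IsCaraExtremal Ω z X c) :
    CaraMetric Ω z X ≤ BergmanMetric Ω K z X := by
  obtain ⟨-, -, -, -, hbmax⟩ := hb
  obtain ⟨hcd, hcz, hc1, hcX⟩ := hc
  have hc1' : ∀ ζ ∈ Ω, ‖c ζ‖ ≤ 1 := fun ζ hζ => (hc1 ζ hζ).le
  have h := hbmax _ ((hK.a2mem_bz hz).mul_of_norm_le_one hΩ.measurableSet hcd hc1').1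
    (by simp [hcz]) ((setIntegral_norm_mul_sq_le hΩ.measurableSet (hK.a2mem_bz hz).2 hc1').trans_eq
      (hK.integral_norm_bz_sq hz))
  rw [fderiv_bz_mul hΩ hK hz hcd hcz, hcX, ← Complex.ofReal_mul, Complex.norm_real,
    Real.norm_of_nonneg (mul_nonneg (Real.sqrt_nonneg _) caraMetric_nonneg)] at h
  exact le_of_mul_le_mul_left h (Real.sqrt_pos.2 (hK.re_diag_pos hz))

theorem isProj_bz_mul [IsFiniteMeasure (volume.restrict Ω)] (hΩ : IsOpen Ω)
    (hK : IsBergmanKernel Ω K) (hz : z ∈ Ω) (hb : IsBergmanExtremal Ω K z X b)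
    (hc : IsCaraExtremal Ω z X c) (hC : 0 < CaraMetric Ω z X) :
    IsProj Ω z X (fun ζ => bz K z ζ * c ζ)
      (fun ζ => ((CaraMetric Ω z X / BergmanMetric Ω K z X : ℝ) : ℂ) * b ζ) := by
  have hB := hC.trans_le (caraMetric_le_bergmanMetric hΩ hK hz hb hc)
  have hκ : 0 < √(K z z).re := Real.sqrt_pos.2 (hK.re_diag_pos hz)
  have hbS := fun {h} => hb.integral_mul_conj_eq_zero (h := h) hΩ hz (mul_pos hκ hB)
  obtain ⟨⟨hbd, hb2⟩, hbz, -, hbX, -⟩ := hb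
  obtain ⟨hcd, hcz, hc1, hcX⟩ := hc
  have hgA := (hK.a2mem_bz hz).mul_of_norm_le_one hΩ.measurableSet hcd fun ζ hζ => (hc1 ζ hζ).le
  set t : ℂ := ((CaraMetric Ω z X / BergmanMetric Ω K z X : ℝ) : ℂ)
  refine ⟨⟨hbd.const_mul t, hb2.const_mul t⟩, fun h hh => ?_, ⟨hgA.1.sub (hbd.const_mul t),
    hgA.2.sub (hb2.const_mul t)⟩, by simp [hcz, hbz], ?_⟩
  · simp_rw [map_mul, mul_left_comm _ (conj t)]
    rw [integral_const_mul, hbS hh, mul_zero]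
  · have hbz' := (hbd z hz).differentiableAt (hΩ.mem_nhds hz)
    have hgz' := (hgA.1 z hz).differentiableAt (hΩ.mem_nhds hz)
    rw [fderiv_sub hgz' (hbz'.const_mul t), sub_apply, fderiv_bz_mul hΩ hK hz hcd hcz,
      fderiv_const_mul hbz', smul_apply, smul_eq_mul, hbX, hcX]
    have hB' : (BergmanMetric Ω K z X : ℂ) ≠ 0 := Complex.ofReal_ne_zero.2 hB.ne'
    simp only [t]
    push_cast
    field_simp
    ring

end BurbeaHahn

theorem stmt_14_general {n : ℕ} (Ω : Set (Cn n)) (hΩo : IsOpen Ω)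
    (hΩb : Bornology.IsBounded Ω)
    (K : Cn n → Cn n → ℂ) (hK : IsBergmanKernel Ω K)
    (z : Cn n) (hz : z ∈ Ω) (X : Cn n) (hX : X ≠ 0)
    (b : Cn n → ℂ) (hb : IsBergmanExtremal Ω K z X b)
    (c : Cn n → ℂ) (hc : IsCaraExtremal Ω z X c) :
    (BergmanMetric Ω K z X > CaraMetric Ω z X / L2norm Ω (fun ζ => bz K z ζ * c ζ) ↔
      ∃ ζ ∈ Ω, ((CaraMetric Ω z X / BergmanMetric Ω K z X : ℝ) : ℂ) * b ζ ≠
        bz K z ζ * c ζ) ∧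
    (BergmanMetric Ω K z X > CaraMetric Ω z X / L2norm Ω (fun ζ => bz K z ζ * c ζ) ↔
      ¬ ∀ h, SzX Ω z X h → (∫ ζ in Ω, bz K z ζ * c ζ * conj (h ζ)) = 0) := by
  have : IsFiniteMeasure (volume.restrict Ω) :=
    isFiniteMeasure_restrict.2 hΩb.measure_lt_top.ne
  have hC := caraMetric_pos hΩo hΩb hz hX
  have hB := hC.trans_le (caraMetric_le_bergmanMetric hΩo hK hz hb hc)
  have hproj := isProj_bz_mul hΩo hK hz hb hc hC
  have hp : ∫ ζ in Ω, ‖((CaraMetric Ω z X / BergmanMetric Ω K z X : ℝ) : ℂ) * b ζ‖ ^ 2 =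
      (CaraMetric Ω z X / BergmanMetric Ω K z X) ^ 2 := by
    simp_rw [norm_mul, mul_pow, Complex.norm_real, Real.norm_eq_abs, sq_abs]
    rw [integral_const_mul, hb.integral_norm_sq, mul_one]
  have hgap : BergmanMetric Ω K z X > CaraMetric Ω z X / L2norm Ω (fun ζ => bz K z ζ * c ζ) ↔
      ¬ ∀ ζ ∈ Ω, bz K z ζ * c ζ = ((CaraMetric Ω z X / BergmanMetric Ω K z X : ℝ) : ℂ) * b ζ := by
    have hgp := hproj.2.2.1
    rw [gt_iff_lt, L2norm, hproj.integral_norm_sq_eq_add, hp,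
      div_sqrt_add_sq_div_lt_iff hC hB (integral_nonneg fun _ => by positivity),
      (integral_nonneg fun _ => by positivity).lt_iff_ne', ne_eq,
      setIntegral_norm_sq_eq_zero_iff hΩo hgp.1.continuousOn hgp.2]
    simp only [Pi.sub_apply, sub_eq_zero]
  refine ⟨hgap.trans ?_, hgap.trans (not_congr (hproj.orthogonal_iff hΩo).symm)⟩
  simp [eq_comm]

/-- Strict inequality in the Burbea–Hahn bound holds iff
`(C/B)·b_{z,X} ≠ b_z c_{z,X}`, iff `b_z c_{z,X}` is not orthogonal to `S_{z,X}`. -/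
theorem stmt_14 {n : ℕ} (Ω : Set (Cn n)) (hΩo : IsOpen Ω) (hΩc : IsConnected Ω)
    (hΩb : Bornology.IsBounded Ω)
    (K : Cn n → Cn n → ℂ) (hK : IsBergmanKernel Ω K)
    (z : Cn n) (hz : z ∈ Ω) (X : Cn n) (hX : X ≠ 0)
    (b : Cn n → ℂ) (hb : IsBergmanExtremal Ω K z X b)
    (c : Cn n → ℂ) (hc : IsCaraExtremal Ω z X c) :
    (BergmanMetric Ω K z X > CaraMetric Ω z X / L2norm Ω (fun ζ => bz K z ζ * c ζ) ↔
      ∃ ζ ∈ Ω, ((CaraMetric Ω z X / BergmanMetric Ω K z X : ℝ) : ℂ) * b ζ ≠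
        bz K z ζ * c ζ) ∧
    (BergmanMetric Ω K z X > CaraMetric Ω z X / L2norm Ω (fun ζ => bz K z ζ * c ζ) ↔
      ¬ ∀ h, SzX Ω z X h → (∫ ζ in Ω, bz K z ζ * c ζ * conj (h ζ)) = 0) :=
  stmt_14_general Ω hΩo hΩb K hK z hz X hX b hb c hc
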